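/- arXiv:0705.0466 — 5 statements merged into one kernel-verified Lean document; each statement's English description precedes it below -/
import Mathlib

section
/- (Dynamic programming principle, deterministic case.) For n ≥ 2 and an admissible couple Q = (Q_min, Q_max) ∈ T⁺(n), P_n(Q; v_0,…,v_{n-1}) = sup{ x v_0 + P_{n-1}(χ(Q,x); v_1,…,v_{n-1}) : x ∈ I_Q }, where χ(Q,x) = ((Q_min - x)⁺, min(Q_max - x, n-1)) and I_Q = [min((Q_min - (n-1))⁺, 1), min(Q_max, 1)]. -/
/-!
Splitting off the first exercise right `q 0 = x ∈ [0, 1]` identifies the feasible payoffs of the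
`n`-period contract with constraint `[Q_min, Q_max]` with the sums `x v_0 + s`, where `s` ranges over
the feasible payoffs of the `(n-1)`-period contract on the shifted payoffs with constraint
`[Q_min - x, Q_max - x]`. Since `n - 1` rights exercise a total in `[0, n - 1]`, that constraint may be
clipped to `χ(Q, x)`, and it is satisfiable exactly when `x ∈ I_Q`. Taking suprema (the inner sets
are nonempty and uniformly bounded by `∑ |v_k|`) gives the recursion.
-/

/-- Value function of the normalized swing contract with deterministic payoffs. -/
noncomputable def swingVal (n : ℕ) (v : ℕ → ℝ) (a b : ℝ) : ℝ :=
  sSup {r : ℝ | ∃ q : ℕ → ℝ, (∀ k < n, q k ∈ Set.Icc (0:ℝ) 1) ∧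
    (∑ k ∈ Finset.range n, q k) ∈ Set.Icc a b ∧
    r = ∑ k ∈ Finset.range n, q k * v k}

open Finset Set

theorem sSup_setOf_exists_add_eq {ι : Type*} {I : Set ι} {c : ι → ℝ} {S : ι → Set ℝ}
    (hS : ∀ x ∈ I, (S x).Nonempty) (hbdd : BddAbove {r | ∃ x ∈ I, ∃ s ∈ S x, r = c x + s}) :
    sSup {r | ∃ x ∈ I, ∃ s ∈ S x, r = c x + s} = sSup {r | ∃ x ∈ I, r = c x + sSup (S x)} := by
  set A := {r | ∃ x ∈ I, ∃ s ∈ S x, r = c x + s}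
  have hbddS : ∀ x ∈ I, BddAbove (S x) := fun x hx =>
    let ⟨M, hM⟩ := hbdd
    ⟨M - c x, fun s hs => by linarith [hM ⟨x, hx, s, hs, rfl⟩]⟩
  have hle : ∀ x ∈ I, c x + sSup (S x) ≤ sSup A := fun x hx => by
    have : sSup (S x) ≤ sSup A - c x := csSup_le (hS x hx) fun s hs => by
      linarith [le_csSup hbdd ⟨x, hx, s, hs, rfl⟩]
    linarith
  rcases I.eq_empty_or_nonempty with rfl | ⟨x₀, hx₀⟩
  · simp [A]
  apply le_antisymm
  · obtain ⟨s₀, hs₀⟩ := hS x₀ hx₀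
    refine csSup_le ⟨_, x₀, hx₀, s₀, hs₀, rfl⟩ ?_
    rintro r ⟨x, hx, s, hs, rfl⟩
    have hbdd' : BddAbove {r | ∃ x ∈ I, r = c x + sSup (S x)} := by
      refine ⟨sSup A, ?_⟩
      rintro _ ⟨x, hx, rfl⟩
      exact hle x hx
    exact (add_le_add_right (le_csSup (hbddS x hx) hs) _).trans (le_csSup hbdd' ⟨x, hx, rfl⟩)
  · refine csSup_le ⟨_, x₀, hx₀, rfl⟩ ?_
    rintro r ⟨x, hx, rfl⟩
    exact hle x hx

def swingSet (n : ℕ) (v : ℕ → ℝ) (a b : ℝ) : Set ℝ :=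
  {r : ℝ | ∃ q : ℕ → ℝ, (∀ k < n, q k ∈ Icc (0:ℝ) 1) ∧
    (∑ k ∈ range n, q k) ∈ Icc a b ∧
    r = ∑ k ∈ range n, q k * v k}

lemma swingVal_eq_sSup (n : ℕ) (v : ℕ → ℝ) (a b : ℝ) :
    swingVal n v a b = sSup (swingSet n v a b) := rfl

lemma sum_range_mem_Icc_of_forall_mem_Icc {n : ℕ} {q : ℕ → ℝ} (hq : ∀ k < n, q k ∈ Icc (0:ℝ) 1) :
    ∑ k ∈ range n, q k ∈ Icc (0:ℝ) n := by
  constructor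
  · exact sum_nonneg fun k hk => (hq k (mem_range.mp hk)).1
  · calc ∑ k ∈ range n, q k ≤ ∑ _k ∈ range n, (1:ℝ) :=
          sum_le_sum fun k hk => (hq k (mem_range.mp hk)).2
      _ = n := by simp

lemma swingSet_bddAbove (n : ℕ) (v : ℕ → ℝ) (a b : ℝ) : BddAbove (swingSet n v a b) := by
  refine ⟨∑ k ∈ range n, |v k|, ?_⟩
  rintro _ ⟨q, hq, -, rfl⟩
  refine sum_le_sum fun k hk => ?_
  obtain ⟨hq0, hq1⟩ := hq k (mem_range.mp hk)
  calc q k * v k ≤ q k * |v k| := mul_le_mul_of_nonneg_left (le_abs_self _) hq0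
    _ ≤ 1 * |v k| := mul_le_mul_of_nonneg_right hq1 (abs_nonneg _)
    _ = |v k| := one_mul _

lemma swingSet_nonempty_iff {n : ℕ} {v : ℕ → ℝ} {a b : ℝ} :
    (swingSet n v a b).Nonempty ↔ max a 0 ≤ min b n := by
  constructor
  · rintro ⟨_, q, hq, ⟨ha, hb⟩, -⟩
    obtain ⟨h0, hn⟩ := sum_range_mem_Icc_of_forall_mem_Icc hq
    exact max_le (le_min (ha.trans hb) (ha.trans hn)) (le_min (h0.trans hb) (by positivity))
  · intro hab
    set t := max a 0
    have ht0 : 0 ≤ t := le_max_right a 0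
    have htn : t ≤ n := hab.trans (min_le_right _ _)
    -- Spread the total `t` evenly; when `n = 0` the constraint forces `t = 0`.
    have hsum : ∑ _k ∈ range n, t / n = t := by
      rcases Nat.eq_zero_or_pos n with rfl | hn
      · simp only [CharP.cast_eq_zero] at htn
        simp [le_antisymm htn ht0]
      · rw [sum_const, card_range, nsmul_eq_mul, mul_div_cancel₀ _ (by positivity)]
    refine ⟨_, fun _ => t / n, fun _ _ => ⟨by positivity, div_le_one_of_le₀ htn (by positivity)⟩,
      ?_, rfl⟩
    rw [hsum]
    exact ⟨le_max_left a 0, hab.trans (min_le_left _ _)⟩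

lemma swingSet_max_zero_min (n : ℕ) (v : ℕ → ℝ) (a b : ℝ) :
    swingSet n v (max a 0) (min b n) = swingSet n v a b := by
  ext r
  refine exists_congr fun q => and_congr_right fun hq => and_congr_left fun _ => ?_
  obtain ⟨h0, hn⟩ := sum_range_mem_Icc_of_forall_mem_Icc hq
  simp only [Set.mem_Icc, max_le_iff, le_min_iff]
  tauto

lemma swingSet_succ (n : ℕ) (v : ℕ → ℝ) (a b : ℝ) :
    swingSet (n + 1) v a b = {r | ∃ x ∈ Icc (0:ℝ) 1,
      ∃ s ∈ swingSet n (fun k => v (k + 1)) (a - x) (b - x), r = x * v 0 + s} := by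
  ext r
  constructor
  · rintro ⟨q, hq, hsum, rfl⟩
    rw [sum_range_succ'] at hsum
    refine ⟨q 0, hq 0 n.succ_pos, _, ⟨fun k => q (k + 1), fun k hk => hq (k + 1) (by omega),
      ?_, rfl⟩, by rw [sum_range_succ']; ring⟩
    exact ⟨by linarith [hsum.1], by linarith [hsum.2]⟩
  · rintro ⟨x, hx, _, ⟨q, hq, hsum, rfl⟩, rfl⟩
    let q' : ℕ → ℝ := fun k => Nat.casesOn k x q
    have hsum' : ∑ k ∈ range (n + 1), q' k = x + ∑ k ∈ range n, q k :=
      (sum_range_succ' _ _).trans (add_comm _ _)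
    have hval : ∑ k ∈ range (n + 1), q' k * v k = x * v 0 + ∑ k ∈ range n, q k * v (k + 1) :=
      (sum_range_succ' _ _).trans (add_comm _ _)
    refine ⟨q', fun k hk => ?_, ?_, hval.symm⟩
    · cases k with
      | zero => exact hx
      | succ k => exact hq k (by omega)
    · rw [hsum']
      exact ⟨by linarith [hsum.1], by linarith [hsum.2]⟩

lemma mem_admissible_iff {n : ℕ} {a b x : ℝ} (hab : a ≤ b) (hb : b ≤ n + 1) :
    x ∈ Icc (min (max (a - n) 0) 1) (min b 1) ↔
      x ∈ Icc (0:ℝ) 1 ∧ max (a - x) 0 ≤ min (b - x) n := by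
  have hn : (0:ℝ) ≤ n := n.cast_nonneg
  rw [min_eq_left (max_le (by linarith) zero_le_one)]
  simp only [Set.mem_Icc, max_le_iff, le_min_iff]
  constructor
  · rintro ⟨⟨han, hx0⟩, hxb, hx1⟩
    exact ⟨⟨hx0, hx1⟩, ⟨by linarith, by linarith⟩, by linarith, hn⟩
  · rintro ⟨⟨hx0, hx1⟩, ⟨-, han⟩, hxb, -⟩
    exact ⟨⟨by linarith, hx0⟩, by linarith, hx1⟩

lemma swingSet_succ_eq_admissible {n : ℕ} (v : ℕ → ℝ) {a b : ℝ} (hab : a ≤ b) (hb : b ≤ n + 1) :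
    swingSet (n + 1) v a b = {r | ∃ x ∈ Icc (min (max (a - n) 0) 1) (min b 1),
      ∃ s ∈ swingSet n (fun k => v (k + 1)) (max (a - x) 0) (min (b - x) n), r = x * v 0 + s} := by
  rw [swingSet_succ]
  ext r
  simp only [swingSet_max_zero_min]
  refine exists_congr fun x => ⟨fun ⟨hx, s, hs, hr⟩ => ⟨?_, s, hs, hr⟩, fun ⟨hx, hr⟩ => ⟨?_, hr⟩⟩
  · exact (mem_admissible_iff hab hb).mpr ⟨hx, swingSet_nonempty_iff.mp ⟨s, hs⟩⟩
  · exact ((mem_admissible_iff hab hb).mp hx).1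

theorem swingVal_dynamic_programming_general (n : ℕ) (hn : 2 ≤ n) (v : ℕ → ℝ)
    (Qmin Qmax : ℝ) (h1 : Qmin ≤ Qmax) (h2 : Qmax ≤ n) :
    swingVal n v Qmin Qmax =
      sSup {r : ℝ | ∃ x ∈ Set.Icc (min (max (Qmin - (n - 1 : ℕ)) 0) 1) (min Qmax 1),
        r = x * v 0 +
          swingVal (n - 1) (fun k => v (k + 1))
            (max (Qmin - x) 0) (min (Qmax - x) ((n : ℝ) - 1))} := by
  obtain ⟨m, rfl⟩ : ∃ m, n = m + 1 := ⟨n - 1, by omega⟩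
  have hm : ((m + 1 : ℕ) : ℝ) - 1 = m := by push_cast; ring
  simp only [Nat.add_sub_cancel, hm]
  push_cast at h2
  have hsplit := swingSet_succ_eq_admissible v h1 h2
  rw [swingVal_eq_sSup, hsplit]
  refine sSup_setOf_exists_add_eq (fun x hx => ?_) (hsplit ▸ swingSet_bddAbove _ _ _ _)
  rw [swingSet_max_zero_min, swingSet_nonempty_iff]
  exact ((mem_admissible_iff h1 h2).mp hx).2

theorem swingVal_dynamic_programming (n : ℕ) (hn : 2 ≤ n) (v : ℕ → ℝ)
    (Qmin Qmax : ℝ) (h0 : 0 ≤ Qmin) (h1 : Qmin ≤ Qmax) (h2 : Qmax ≤ n) :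
    swingVal n v Qmin Qmax =
      sSup {r : ℝ | ∃ x ∈ Set.Icc (min (max (Qmin - (n - 1 : ℕ)) 0) 1) (min Qmax 1),
        r = x * v 0 +
          swingVal (n - 1) (fun k => v (k + 1))
            (max (Qmin - x) 0) (min (Qmax - x) ((n : ℝ) - 1))} :=
  swingVal_dynamic_programming_general n hn v Qmin Qmax h1 h2
end

section
/- (Two-period nonnegative case, explicit premium.) If v_0 ≥ 0 and v_1 ≥ 0, then for all admissible (Q_min, Q_max) ∈ T⁺(2), P(Q_min, Q_max) = min((Q_max - 1)⁺, 1)·min(v_0, v_1) + min(Q_max, 1)·max(v_0, v_1); in particular P does not depend on Q_min. -/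
theorem two_period_nonneg_explicit (v0 v1 Qmin Qmax : ℝ)
    (hv0 : 0 ≤ v0) (hv1 : 0 ≤ v1)
    (h0 : 0 ≤ Qmin) (h1 : Qmin ≤ Qmax) (h2 : Qmax ≤ 2) :
    sSup {r : ℝ | ∃ q0 ∈ Set.Icc (0:ℝ) 1, ∃ q1 ∈ Set.Icc (0:ℝ) 1,
        (q0 + q1) ∈ Set.Icc Qmin Qmax ∧ r = q0 * v0 + q1 * v1} =
      min (max (Qmax - 1) 0) 1 * min v0 v1 + min Qmax 1 * max v0 v1 := by
  have hQ0 : 0 ≤ Qmax := le_trans h0 h1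
  set s := min (max (Qmax - 1) 0) 1 with hs
  set b := min Qmax 1 with hb
  have hs0 : 0 ≤ s := le_min (le_max_right _ _) one_pos.le
  have hs1 : s ≤ 1 := min_le_right _ _
  have hb0 : 0 ≤ b := le_min hQ0 one_pos.le
  have hb1 : b ≤ 1 := min_le_right _ _
  have hsb : s + b = Qmax := by
    rcases le_total Qmax 1 with h | h
    · rw [hs, hb, min_eq_left h, max_eq_right (by linarith),
        min_eq_left one_pos.le]; ring
    · rw [hs, hb, min_eq_right h, max_eq_left (by linarith),
        min_eq_left (by linarith)]; ring
  have hmem : (s * min v0 v1 + b * max v0 v1) ∈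
      {r : ℝ | ∃ q0 ∈ Set.Icc (0:ℝ) 1, ∃ q1 ∈ Set.Icc (0:ℝ) 1,
        (q0 + q1) ∈ Set.Icc Qmin Qmax ∧ r = q0 * v0 + q1 * v1} := by
    rcases le_total v0 v1 with h | h
    · exact ⟨s, ⟨hs0, hs1⟩, b, ⟨hb0, hb1⟩, ⟨by linarith, by linarith⟩,
        by rw [min_eq_left h, max_eq_right h]⟩
    · exact ⟨b, ⟨hb0, hb1⟩, s, ⟨hs0, hs1⟩, ⟨by linarith, by linarith⟩,
        by rw [min_eq_right h, max_eq_left h]; ring⟩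
  have hub : ∀ r ∈ {r : ℝ | ∃ q0 ∈ Set.Icc (0:ℝ) 1, ∃ q1 ∈ Set.Icc (0:ℝ) 1,
        (q0 + q1) ∈ Set.Icc Qmin Qmax ∧ r = q0 * v0 + q1 * v1},
      r ≤ s * min v0 v1 + b * max v0 v1 := by
    rintro r ⟨q0, ⟨hq00, hq01⟩, q1, ⟨hq10, hq11⟩, ⟨_, hsum⟩, rfl⟩
    rcases le_total v0 v1 with h | h
    · rw [min_eq_left h, max_eq_right h]
      have hq1b : q1 ≤ b := le_min (by linarith) hq11
      nlinarith [mul_nonneg (sub_nonneg.2 hq1b) (sub_nonneg.2 h),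
        mul_nonneg (by linarith : (0:ℝ) ≤ s + b - q0 - q1) hv0]
    · rw [min_eq_right h, max_eq_left h]
      have hq0b : q0 ≤ b := le_min (by linarith) hq01
      nlinarith [mul_nonneg (sub_nonneg.2 hq0b) (sub_nonneg.2 h),
        mul_nonneg (by linarith : (0:ℝ) ≤ s + b - q0 - q1) hv1]
  exact le_antisymm (csSup_le ⟨_, hmem⟩ hub) (le_csSup ⟨_, hub⟩ hmem)
end

section
/- (Piecewise affinity of the premium, deterministic case.) For any n ≥ 1 and real payoffs v_0,…,v_{n-1}, the value function Q ↦ P(Q) is continuous and affine on each triangle T⁺_{ij} (0 ≤ i ≤ j ≤ n-1) and T⁻_{ij} (0 ≤ i < j ≤ n-1) of the standard triangular tiling of T⁺(n). -/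
/-- The admissible triangle `T⁺(n)`. -/
def Tplus (n : ℕ) : Set (ℝ × ℝ) := {p | 0 ≤ p.1 ∧ p.1 ≤ p.2 ∧ p.2 ≤ n}

/-- Upper triangle `T⁺_{ij}`. -/
def TplusTile (i j : ℕ) : Set (ℝ × ℝ) :=
  {p | (i:ℝ) ≤ p.1 ∧ p.1 ≤ i + 1 ∧ (j:ℝ) ≤ p.2 ∧ p.2 ≤ j + 1 ∧ p.2 ≥ p.1 + j - i}

/-- Lower triangle `T⁻_{ij}`. -/
def TminusTile (i j : ℕ) : Set (ℝ × ℝ) :=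
  {p | (i:ℝ) ≤ p.1 ∧ p.1 ≤ i + 1 ∧ (j:ℝ) ≤ p.2 ∧ p.2 ≤ j + 1 ∧ p.2 ≤ p.1 + j - i}

open Finset

/-- The piecewise linear interpolation of the partial sums `m ↦ ∑ k ∈ range m, u k`. -/
noncomputable def interpPartialSum (u : ℕ → ℝ) (n : ℕ) (x : ℝ) : ℝ :=
  ∑ k ∈ range n, u k * max 0 (min 1 (x - k))

lemma continuous_interpPartialSum (u : ℕ → ℝ) (n : ℕ) : Continuous (interpPartialSum u n) := by
  unfold interpPartialSum
  fun_prop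

lemma interpPartialSum_of_mem_Icc (u : ℕ → ℝ) {n m : ℕ} (hm : m < n) {x : ℝ}
    (hx : x ∈ Set.Icc (m : ℝ) (m + 1)) :
    interpPartialSum u n x = ∑ k ∈ range m, u k + (x - m) * u m := by
  obtain ⟨hmx, hxm⟩ := hx
  have below : ∀ k ∈ range m, u k * max 0 (min 1 (x - k)) = u k := fun k hk => by
    have : (k : ℝ) + 1 ≤ m := by exact_mod_cast mem_range.1 hk
    rw [min_eq_left (by linarith), max_eq_right zero_le_one, mul_one]
  have above : ∀ k ∈ Ico (m + 1) n, u k * max 0 (min 1 (x - k)) = 0 := fun k hk => by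
    have : (m : ℝ) + 1 ≤ k := by exact_mod_cast (mem_Ico.1 hk).1
    rw [min_eq_right (by linarith), max_eq_left (by linarith), mul_zero]
  rw [interpPartialSum, ← sum_range_add_sum_Ico _ hm, sum_range_succ, sum_congr rfl below,
    sum_congr rfl above, sum_const_zero, add_zero, min_eq_right (by linarith),
    max_eq_right (by linarith), mul_comm]

lemma monotoneOn_interpPartialSum {u : ℕ → ℝ} {n m : ℕ} (hu : ∀ k < m, 0 ≤ u k) :
    MonotoneOn (interpPartialSum u n) (Set.Iic (m : ℝ)) := by
  intro y hy x hx hyx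
  refine sum_le_sum fun k _ => ?_
  rcases lt_or_ge k m with hk | hk
  · exact mul_le_mul_of_nonneg_left (by gcongr) (hu k hk)
  · have : (m : ℝ) ≤ k := by exact_mod_cast hk
    have hxm : x ≤ m := hx
    rw [max_eq_left (min_le_of_right_le (by linarith)),
      max_eq_left (min_le_of_right_le (by linarith))]

lemma antitoneOn_interpPartialSum {u : ℕ → ℝ} {n m : ℕ} (hu : ∀ k, m ≤ k → k < n → u k ≤ 0) :
    AntitoneOn (interpPartialSum u n) (Set.Ici (m : ℝ)) := by
  intro y hy x hx hyx
  refine sum_le_sum fun k hkn => ?_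
  rcases le_or_gt m k with hk | hk
  · exact mul_le_mul_of_nonpos_left (by gcongr) (hu k hk (mem_range.1 hkn))
  · have : (k : ℝ) + 1 ≤ m := by exact_mod_cast hk
    have hmy : (m : ℝ) ≤ y := hy
    rw [min_eq_left (by linarith), min_eq_left (by linarith)]

lemma le_apply_max_min_of_monotoneOn_antitoneOn {f : ℝ → ℝ} {m a b x : ℝ}
    (hmono : MonotoneOn f (Set.Iic m)) (hanti : AntitoneOn f (Set.Ici m))
    (hx : x ∈ Set.Icc a b) :
    f x ≤ f (max a (min b m)) := by
  obtain ⟨hax, hxb⟩ := hx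
  rcases le_total x m with hxm | hmx
  · exact hmono hxm (max_le (hax.trans hxm) (min_le_right _ _))
      (le_max_of_le_right (le_min hxb hxm))
  · exact hanti (le_max_of_le_right (le_min (hmx.trans hxb) le_rfl)) hmx
      (max_le hax ((min_le_right _ _).trans hmx))

lemma exists_nat_mem_Icc {n : ℕ} (hn : 1 ≤ n) {x : ℝ} (hx : x ∈ Set.Icc 0 (n : ℝ)) :
    ∃ m < n, x ∈ Set.Icc (m : ℝ) (m + 1) := by
  rcases lt_or_ge ⌊x⌋₊ n with hlt | hge
  · exact ⟨⌊x⌋₊, hlt, Nat.floor_le hx.1, (Nat.lt_floor_add_one x).le⟩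
  · have hxn : x = n := le_antisymm hx.2 ((Nat.cast_le.2 hge).trans (Nat.floor_le hx.1))
    refine ⟨n - 1, by omega, ?_, ?_⟩ <;> rw [Nat.cast_sub hn] <;> simp [hxn]

lemma exists_sign_change {u : ℕ → ℝ} {n : ℕ} (hu : ∀ {k l}, k ≤ l → l < n → u l ≤ u k) :
    ∃ m : ℕ, (∀ k < m, 0 ≤ u k) ∧ ∀ k, m ≤ k → k < n → u k ≤ 0 := by
  classical
  by_cases h : ∃ k, k < n ∧ u k < 0
  · have hspec := Nat.find_spec h
    refine ⟨Nat.find h, fun k hk => ?_, fun k hk hkn => (hu hk hkn).trans hspec.2.le⟩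
    have := Nat.find_min h hk
    push Not at this
    exact this (hk.trans hspec.1)
  · push Not at h
    exact ⟨n, h, fun k hk hkn => absurd hkn (not_lt.2 hk)⟩

lemma sum_mul_le_sum_posPart_add {n : ℕ} {q : ℕ → ℝ} (hq : ∀ k < n, q k ∈ Set.Icc (0 : ℝ) 1)
    (v : ℕ → ℝ) (t : ℝ) :
    ∑ k ∈ range n, q k * v k ≤ ∑ k ∈ range n, (v k - t)⁺ + t * ∑ k ∈ range n, q k := by
  rw [mul_sum, ← sum_add_distrib]
  refine sum_le_sum fun k hk => ?_
  obtain ⟨hq0, hq1⟩ := hq k (mem_range.1 hk)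
  have : q k * (v k - t) ≤ (v k - t)⁺ := by
    rcases le_total 0 (v k - t) with h | h
    · rw [posPart_eq_self.2 h]
      exact mul_le_of_le_one_left h hq1
    · exact (mul_nonpos_of_nonneg_of_nonpos hq0 h).trans (posPart_nonneg _)
  linarith

noncomputable def sortPerm (n : ℕ) (v : ℕ → ℝ) : Equiv.Perm (Fin n) :=
  Tuple.sort fun k : Fin n => -v k

/-- The payoffs in decreasing order (padded with `0` beyond `n`). -/
noncomputable def sortedVal (n : ℕ) (v : ℕ → ℝ) (m : ℕ) : ℝ :=
  if h : m < n then v (sortPerm n v ⟨m, h⟩) else 0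

noncomputable def sortedRank (n : ℕ) (v : ℕ → ℝ) (k : ℕ) : ℕ :=
  if h : k < n then (sortPerm n v).symm ⟨k, h⟩ else 0

lemma sortedVal_anti {n : ℕ} {v : ℕ → ℝ} {m m' : ℕ} (h : m ≤ m') (h' : m' < n) :
    sortedVal n v m' ≤ sortedVal n v m := by
  have hm : m < n := h.trans_lt h'
  have := Tuple.monotone_sort (fun k : Fin n => -v k) (show (⟨m, hm⟩ : Fin n) ≤ ⟨m', h'⟩ from h)
  simp only [Function.comp_apply, neg_le_neg_iff] at this
  simpa only [sortedVal, sortPerm, dif_pos hm, dif_pos h'] using this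

lemma sum_range_sortedRank (n : ℕ) (v : ℕ → ℝ) (h : ℕ → ℝ → ℝ) :
    ∑ k ∈ range n, h (sortedRank n v k) (v k) = ∑ m ∈ range n, h m (sortedVal n v m) := by
  rw [← Fin.sum_univ_eq_sum_range (fun k => h (sortedRank n v k) (v k)),
    ← Fin.sum_univ_eq_sum_range (fun m => h m (sortedVal n v m)),
    ← Equiv.sum_comp (sortPerm n v)]
  simp [sortedRank, sortedVal]

section Swing

variable {n : ℕ} {v : ℕ → ℝ}

lemma sum_mul_le_interpPartialSum (hn : 1 ≤ n) {q : ℕ → ℝ}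
    (hq : ∀ k < n, q k ∈ Set.Icc (0 : ℝ) 1) :
    ∑ k ∈ range n, q k * v k ≤ interpPartialSum (sortedVal n v) n (∑ k ∈ range n, q k) := by
  set x := ∑ k ∈ range n, q k
  set w := sortedVal n v
  have hx : x ∈ Set.Icc 0 (n : ℝ) :=
    ⟨sum_nonneg fun k hk => (hq k (mem_range.1 hk)).1,
      (sum_le_sum fun k hk => (hq k (mem_range.1 hk)).2).trans (by simp)⟩
  obtain ⟨m, hm, hxm⟩ := exists_nat_mem_Icc hn hx
  have hsum_posPart : ∑ k ∈ range n, (w k - w m)⁺ = ∑ k ∈ range m, (w k - w m) := by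
    have top : ∀ k ∈ range m, (w k - w m)⁺ = w k - w m := fun k hk =>
      posPart_eq_self.2 (sub_nonneg.2 (sortedVal_anti (mem_range.1 hk).le hm))
    have rest : ∀ k ∈ Ico m n, (w k - w m)⁺ = 0 := fun k hk =>
      posPart_eq_zero.2 (sub_nonpos.2 (sortedVal_anti (mem_Ico.1 hk).1 (mem_Ico.1 hk).2))
    rw [← sum_range_add_sum_Ico _ hm.le, sum_congr rfl top, sum_eq_zero rest, add_zero]
  calc ∑ k ∈ range n, q k * v k ≤ ∑ k ∈ range n, (v k - w m)⁺ + w m * x :=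
        sum_mul_le_sum_posPart_add hq v (w m)
    _ = ∑ k ∈ range n, (w k - w m)⁺ + w m * x := by
        rw [sum_range_sortedRank n v fun _ y => (y - w m)⁺]
    _ = interpPartialSum w n x := by
        rw [hsum_posPart, interpPartialSum_of_mem_Icc w hm hxm, sum_sub_distrib, sum_const,
          card_range, nsmul_eq_mul]
        ring

lemma exists_sum_eq_and_sum_mul_eq_interpPartialSum (hn : 1 ≤ n) {c : ℝ}
    (hc : c ∈ Set.Icc 0 (n : ℝ)) :
    ∃ q : ℕ → ℝ, (∀ k < n, q k ∈ Set.Icc (0 : ℝ) 1) ∧ ∑ k ∈ range n, q k = c ∧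
      ∑ k ∈ range n, q k * v k = interpPartialSum (sortedVal n v) n c := by
  obtain ⟨m, hm, hcm⟩ := exists_nat_mem_Icc hn hc
  refine ⟨fun k => max 0 (min 1 (c - sortedRank n v k)),
    fun k _ => ⟨le_max_left _ _, max_le zero_le_one (min_le_left _ _)⟩, ?_, ?_⟩
  · have hsum := interpPartialSum_of_mem_Icc (fun _ => 1) hm hcm
    simp only [interpPartialSum, one_mul, mul_one, sum_const, card_range, nsmul_eq_mul] at hsum
    refine (sum_range_sortedRank n v fun m _ => max 0 (min 1 (c - m))).trans ?_
    rw [hsum]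
    ring
  · refine (sum_range_sortedRank n v fun m y => max 0 (min 1 (c - m)) * y).trans ?_
    simp only [interpPartialSum, mul_comm]

lemma swingVal_eq_interpPartialSum (hn : 1 ≤ n) {m : ℕ} (hpos : ∀ k < m, 0 ≤ sortedVal n v k)
    (hneg : ∀ k, m ≤ k → k < n → sortedVal n v k ≤ 0) {a b : ℝ} (ha : 0 ≤ a) (hab : a ≤ b)
    (hb : b ≤ n) :
    swingVal n v a b = interpPartialSum (sortedVal n v) n (max a (min b m)) := by
  have hc : max a (min b (m : ℝ)) ∈ Set.Icc a b := ⟨le_max_left _ _, max_le hab (min_le_left _ _)⟩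
  obtain ⟨q, hq, hsum, hval⟩ :=
    exists_sum_eq_and_sum_mul_eq_interpPartialSum (v := v) hn ⟨ha.trans hc.1, hc.2.trans hb⟩
  refine IsGreatest.csSup_eq ⟨⟨q, hq, hsum ▸ hc, hval.symm⟩, ?_⟩
  rintro r ⟨q', hq', hs', rfl⟩
  exact (sum_mul_le_interpPartialSum hn hq').trans <| le_apply_max_min_of_monotoneOn_antitoneOn
    (monotoneOn_interpPartialSum hpos) (antitoneOn_interpPartialSum hneg) hs'

end Swing

def IsAffineOn (f : ℝ × ℝ → ℝ) (s : Set (ℝ × ℝ)) : Prop :=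
  ∃ a b c : ℝ, ∀ p ∈ s, f p = a * p.1 + b * p.2 + c

lemma IsAffineOn.mono {f : ℝ × ℝ → ℝ} {s t : Set (ℝ × ℝ)} (h : IsAffineOn f t) (hst : s ⊆ t) :
    IsAffineOn f s :=
  let ⟨a, b, c, h⟩ := h
  ⟨a, b, c, fun p hp => h p (hst hp)⟩

lemma IsAffineOn.congr {f g : ℝ × ℝ → ℝ} {s : Set (ℝ × ℝ)} (h : IsAffineOn f s)
    (hfg : Set.EqOn g f s) : IsAffineOn g s :=
  let ⟨a, b, c, h⟩ := h
  ⟨a, b, c, fun p hp => (hfg hp).trans (h p hp)⟩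

def squareAboveDiag (i j : ℕ) : Set (ℝ × ℝ) :=
  {p | p.1 ∈ Set.Icc (i : ℝ) (i + 1) ∧ p.2 ∈ Set.Icc (j : ℝ) (j + 1) ∧ p.1 ≤ p.2}

lemma TplusTile_subset_squareAboveDiag {i j : ℕ} (hij : i ≤ j) :
    TplusTile i j ⊆ squareAboveDiag i j := fun _ ⟨h1, h2, h3, h4, h5⟩ => by
  have : (i : ℝ) ≤ j := by exact_mod_cast hij
  exact ⟨⟨h1, h2⟩, ⟨h3, h4⟩, by linarith⟩

lemma TminusTile_subset_squareAboveDiag {i j : ℕ} (hij : i < j) :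
    TminusTile i j ⊆ squareAboveDiag i j := fun _ ⟨h1, h2, h3, h4, _⟩ => by
  have : (i : ℝ) + 1 ≤ j := by exact_mod_cast hij
  exact ⟨⟨h1, h2⟩, ⟨h3, h4⟩, by linarith⟩

lemma squareAboveDiag_subset_Tplus {i j n : ℕ} (hj : j < n) : squareAboveDiag i j ⊆ Tplus n :=
  fun _ ⟨⟨hi, _⟩, ⟨_, hj1⟩, hab⟩ => by
  have : (j : ℝ) + 1 ≤ n := by exact_mod_cast hj
  exact ⟨(Nat.cast_nonneg i).trans hi, hab, by linarith⟩

lemma isAffineOn_interpPartialSum_max_min (u : ℕ → ℝ) {i j n : ℕ} (hij : i ≤ j) (hj : j < n)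
    (m : ℕ) :
    IsAffineOn (fun p => interpPartialSum u n (max p.1 (min p.2 m))) (squareAboveDiag i j) := by
  rcases le_or_gt m i with hmi | him
  · refine ⟨u i, 0, ∑ k ∈ range i, u k - i * u i, fun p ⟨ha, _, hab⟩ => ?_⟩
    dsimp only
    have : (m : ℝ) ≤ i := by exact_mod_cast hmi
    rw [min_eq_right (by linarith [ha.1]), max_eq_left (by linarith [ha.1]),
      interpPartialSum_of_mem_Icc u (hij.trans_lt hj) ha]
    ring
  rcases le_or_gt m j with hmj | hjm
  · refine ⟨0, 0, interpPartialSum u n m, fun p ⟨ha, hb, _⟩ => ?_⟩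
    dsimp only
    have : (i : ℝ) + 1 ≤ m := by exact_mod_cast him
    have : (m : ℝ) ≤ j := by exact_mod_cast hmj
    rw [min_eq_right (by linarith [hb.1]), max_eq_right (by linarith [ha.2])]
    ring
  · refine ⟨0, u j, ∑ k ∈ range j, u k - j * u j, fun p ⟨_, hb, hab⟩ => ?_⟩
    dsimp only
    have : (j : ℝ) + 1 ≤ m := by exact_mod_cast hjm
    rw [min_eq_left (by linarith [hb.2]), max_eq_right hab, interpPartialSum_of_mem_Icc u hj hb]
    ring

theorem swingVal_piecewise_affine (n : ℕ) (hn : 1 ≤ n) (v : ℕ → ℝ) :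
    ContinuousOn (fun p : ℝ × ℝ => swingVal n v p.1 p.2) (Tplus n) ∧
    (∀ i j : ℕ, i ≤ j → j ≤ n - 1 →
      ∃ a b c : ℝ, ∀ p ∈ TplusTile i j, swingVal n v p.1 p.2 = a * p.1 + b * p.2 + c) ∧
    (∀ i j : ℕ, i < j → j ≤ n - 1 →
      ∃ a b c : ℝ, ∀ p ∈ TminusTile i j, swingVal n v p.1 p.2 = a * p.1 + b * p.2 + c) := by
  obtain ⟨m, hpos, hneg⟩ := exists_sign_change (u := sortedVal n v) sortedVal_anti
  have closed_form : Set.EqOn (fun p : ℝ × ℝ => swingVal n v p.1 p.2)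
      (fun p => interpPartialSum (sortedVal n v) n (max p.1 (min p.2 m))) (Tplus n) :=
    fun p ⟨ha, hab, hb⟩ => swingVal_eq_interpPartialSum hn hpos hneg ha hab hb
  have affine_on_square : ∀ i j, i ≤ j → j ≤ n - 1 →
      IsAffineOn (fun p => swingVal n v p.1 p.2) (squareAboveDiag i j) := fun i j hij hj =>
    (isAffineOn_interpPartialSum_max_min _ hij (by omega) m).congr
      (closed_form.mono (squareAboveDiag_subset_Tplus (by omega)))
  refine ⟨ContinuousOn.congr ?_ closed_form, fun i j hij hj => ?_, fun i j hij hj => ?_⟩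
  · exact ((continuous_interpPartialSum _ n).comp (by fun_prop)).continuousOn
  · exact (affine_on_square i j hij hj).mono (TplusTile_subset_squareAboveDiag hij)
  · exact (affine_on_square i j hij.le hj).mono (TminusTile_subset_squareAboveDiag hij)
end

section
/- (Stability of attainable constraints.) For Q⁰ = (Q⁰_min, Q⁰_max) ∈ T⁺(n) ∩ ℕ², define the attainable residual constraints at time k as 𝒬_k = { ((Q⁰_min - ℓ)⁺, min((Q⁰_max - ℓ)⁺, n-k)) : ℓ = 0,…,k }. Then for every Q ∈ 𝒬_k, both χ(Q,1) = ((Q_min - 1)⁺, (Q_max - 1)⁺) and χ(Q,0) = (Q_min, min(Q_max, n-k-1)) belong to 𝒬_{k+1}, for 0 ≤ k ≤ n-2. -/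
/-- The set of attainable residual global constraints at time `k`. -/
def attainable (n : ℕ) (Q0min Q0max : ℕ) (k : ℕ) : Set (ℕ × ℕ) :=
  {Q | ∃ l ≤ k, Q = (Q0min - l, min (Q0max - l) (n - k))}

theorem attainable_stable (n : ℕ) (hn : 2 ≤ n) (Q0min Q0max : ℕ)
    (h1 : Q0min ≤ Q0max) (h2 : Q0max ≤ n)
    (k : ℕ) (hk : k ≤ n - 2) :
    ∀ Q ∈ attainable n Q0min Q0max k,
      (Q.1 - 1, Q.2 - 1) ∈ attainable n Q0min Q0max (k + 1) ∧
      (Q.1, min Q.2 (n - k - 1)) ∈ attainable n Q0min Q0max (k + 1) := by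
  rintro Q ⟨l, hl, rfl⟩
  constructor
  · refine ⟨l + 1, by omega, ?_⟩
    simp only [Prod.mk.injEq]
    refine ⟨by omega, ?_⟩
    rw [← Nat.sub_min_sub_right]
    congr 1 <;> omega
  · refine ⟨l, by omega, ?_⟩
    simp only [Prod.mk.injEq]
    refine ⟨trivial, ?_⟩
    rw [min_assoc]
    congr 1
    omega
end

section
/- (Quasi-bang-bang control.) For n ≥ 1, real payoffs v_0,…,v_{n-1}, and admissible constraints (Q_min, Q_max) ∈ T⁺(n) with Q_max − Q_min ∈ ℕ, there exists an optimal control q* ∈ [0,1]^n attaining P(Q_min, Q_max) such that q*_k ∈ {0,1} for all k except at most one index k₀. -/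
/-!
Maximise the linear payoff `q ⬝ᵥ v` over the compact feasible set. If a feasible `q` has two
fractional coordinates `i ≠ j` with `v j ≤ v i`, moving the mass `min (1 - q i) (q j)` from `j`
to `i` keeps `q` feasible, does not decrease the payoff, and turns one more coordinate into `0`
or `1`. Iterating this from a maximiser gives a maximiser with at most one fractional coordinate.
-/

open Finset

section

variable {ι : Type*} [Fintype ι]

def controlSet (a b : ℝ) : Set (ι → ℝ) :=
  Set.Icc 0 1 ∩ (fun p => ∑ i, p i) ⁻¹' Set.Icc a b

noncomputable def fractionalSupport (p : ι → ℝ) : Finset ι :=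
  {i | p i ≠ 0 ∧ p i ≠ 1}

variable {a b : ℝ}

theorem mem_fractionalSupport {p : ι → ℝ} {i : ι} :
    i ∈ fractionalSupport p ↔ p i ≠ 0 ∧ p i ≠ 1 := by
  simp [fractionalSupport]

theorem isCompact_controlSet (a b : ℝ) : IsCompact (controlSet (ι := ι) a b) :=
  isCompact_Icc.inter_right <| isClosed_Icc.preimage <| by fun_prop

theorem controlSet_nonempty (ha : 0 ≤ a) (hab : a ≤ b) (haι : a ≤ Fintype.card ι) :
    (controlSet (ι := ι) a b).Nonempty := by
  refine ⟨fun _ => a / Fintype.card ι,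
    ⟨fun _ => by positivity, fun _ => div_le_one_of_le₀ haι (by positivity)⟩, ?_⟩
  rcases (Fintype.card ι).eq_zero_or_pos with h | h
  · have : a = 0 := le_antisymm (by simpa [h] using haι) ha
    simp [h, this, ha.trans hab]
  · have : (Fintype.card ι : ℝ) ≠ 0 := by positivity
    simp [mul_div_cancel₀ a this, hab]

theorem exists_transfer_mem_controlSet [DecidableEq ι] (v : ι → ℝ) {p : ι → ℝ}
    (hp : p ∈ controlSet a b) {i j : ι} (hi : i ∈ fractionalSupport p)
    (hj : j ∈ fractionalSupport p) (hij : i ≠ j) (hv : v j ≤ v i) :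
    ∃ p' ∈ controlSet a b,
      p ⬝ᵥ v ≤ p' ⬝ᵥ v ∧ fractionalSupport p' ⊂ fractionalSupport p := by
  obtain ⟨⟨hp0, hp1⟩, hsum⟩ := hp
  replace hp0 : ∀ k, 0 ≤ p k := hp0
  replace hp1 : ∀ k, p k ≤ 1 := hp1
  set t := min (1 - p i) (p j) with ht
  have ht0 : 0 ≤ t := le_min (sub_nonneg.mpr (hp1 i)) (hp0 j)
  set p' := p + t • (Pi.single i 1 - Pi.single j 1)
  have hp'i : p' i = p i + t := by simp [p', hij]
  have hp'j : p' j = p j - t := by simp [p', hij.symm, sub_eq_add_neg]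
  have hp'k : ∀ k, k ≠ i → k ≠ j → p' k = p k := fun k hki hkj => by simp [p', hki, hkj]
  have hbox : ∀ k, 0 ≤ p' k ∧ p' k ≤ 1 := by
    intro k
    by_cases hki : k = i
    · rw [hki, hp'i]
      exact ⟨by linarith [hp0 i], by linarith [min_le_left (1 - p i) (p j)]⟩
    by_cases hkj : k = j
    · rw [hkj, hp'j]
      exact ⟨by linarith [min_le_right (1 - p i) (p j)], by linarith [hp1 j]⟩
    · rw [hp'k k hki hkj]
      exact ⟨hp0 k, hp1 k⟩
  have hsub : fractionalSupport p' ⊆ fractionalSupport p := by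
    intro k hk
    by_cases hki : k = i
    · exact hki ▸ hi
    by_cases hkj : k = j
    · exact hkj ▸ hj
    · rwa [mem_fractionalSupport, ← hp'k k hki hkj, ← mem_fractionalSupport]
  refine ⟨p', ⟨⟨fun k => (hbox k).1, fun k => (hbox k).2⟩, ?_⟩, ?_, ?_⟩
  · simpa [p', sum_add_distrib, ← mul_sum, sum_sub_distrib] using hsum
  · have : p' ⬝ᵥ v = p ⬝ᵥ v + t * (v i - v j) := by
      simp [p', add_dotProduct, smul_dotProduct, sub_dotProduct]
    nlinarith
  · rw [Finset.ssubset_iff_of_subset hsub]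
    rcases min_choice (1 - p i) (p j) with h | h
    · exact ⟨i, hi, by simp [mem_fractionalSupport, hp'i, ht.trans h]⟩
    · exact ⟨j, hj, by simp [mem_fractionalSupport, hp'j, ht.trans h]⟩

theorem exists_card_fractionalSupport_le_one [DecidableEq ι] (v : ι → ℝ) {p : ι → ℝ}
    (hp : p ∈ controlSet a b) :
    ∃ q ∈ controlSet a b, p ⬝ᵥ v ≤ q ⬝ᵥ v ∧ #(fractionalSupport q) ≤ 1 := by
  induction hm : #(fractionalSupport p) using Nat.strong_induction_on generalizing p with
  | _ m ih =>
  rcases le_or_gt m 1 with hm1 | hm1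
  · exact ⟨p, hp, le_rfl, hm ▸ hm1⟩
  obtain ⟨i, hi, j, hj, hij⟩ := one_lt_card.mp (hm ▸ hm1)
  obtain ⟨p', hp', hpp', hss⟩ := (le_total (v j) (v i)).elim
    (exists_transfer_mem_controlSet v hp hi hj hij)
    (exists_transfer_mem_controlSet v hp hj hi hij.symm)
  obtain ⟨q, hq, hp'q, hq1⟩ := ih _ (hm ▸ card_lt_card hss) hp' rfl
  exact ⟨q, hq, hpp'.trans hp'q, hq1⟩

theorem exists_isMaxOn_card_fractionalSupport_le_one [DecidableEq ι] (v : ι → ℝ)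
    (hne : (controlSet (ι := ι) a b).Nonempty) :
    ∃ q ∈ controlSet a b,
      IsMaxOn (· ⬝ᵥ v) (controlSet a b) q ∧ #(fractionalSupport q) ≤ 1 := by
  obtain ⟨p, hp, hpmax⟩ := (isCompact_controlSet a b).exists_isMaxOn hne
    (continuous_id.dotProduct continuous_const).continuousOn
  obtain ⟨q, hq, hpq, hq1⟩ := exists_card_fractionalSupport_le_one v hp
  exact ⟨q, hq, fun r hr => (hpmax hr).trans hpq, hq1⟩

end

theorem mem_controlSet_fin_iff {n : ℕ} {a b : ℝ} {p : ℕ → ℝ} :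
    (fun i : Fin n => p i) ∈ controlSet a b ↔
      (∀ k < n, p k ∈ Set.Icc (0 : ℝ) 1) ∧ ∑ k ∈ range n, p k ∈ Set.Icc a b := by
  simp [controlSet, Pi.le_def, Fin.forall_iff, Fin.sum_univ_eq_sum_range p n, forall_and]

theorem dotProduct_fin_eq_sum_range {n : ℕ} (p v : ℕ → ℝ) :
    ((fun i : Fin n => p i) ⬝ᵥ fun i => v i) = ∑ k ∈ range n, p k * v k :=
  Fin.sum_univ_eq_sum_range (fun k => p k * v k) n

theorem quasi_bang_bang_general (n : ℕ) (v : ℕ → ℝ)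
    (Qmin Qmax : ℝ) (h0 : 0 ≤ Qmin) (h1 : Qmin ≤ Qmax) (h2 : Qmax ≤ n) :
    ∃ q : ℕ → ℝ, (∀ k < n, q k ∈ Set.Icc (0:ℝ) 1) ∧
      (∑ k ∈ Finset.range n, q k) ∈ Set.Icc Qmin Qmax ∧
      (∑ k ∈ Finset.range n, q k * v k) =
        sSup {r : ℝ | ∃ p : ℕ → ℝ, (∀ k < n, p k ∈ Set.Icc (0:ℝ) 1) ∧
          (∑ k ∈ Finset.range n, p k) ∈ Set.Icc Qmin Qmax ∧
          r = ∑ k ∈ Finset.range n, p k * v k} ∧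
      ∃ k0 : ℕ, ∀ k < n, k ≠ k0 → q k ∈ ({0, 1} : Set ℝ) := by
  obtain ⟨q, hq, hqmax, hq1⟩ :=
    exists_isMaxOn_card_fractionalSupport_le_one (fun i : Fin n => v i)
      (controlSet_nonempty h0 h1 (by simpa using h1.trans h2))
  set q' : ℕ → ℝ := Function.extend Fin.val q 0
  have hq' : (fun i : Fin n => q' i) = q := funext (Fin.val_injective.extend_apply q 0)
  obtain ⟨hq'box, hq'sum⟩ := mem_controlSet_fin_iff.mp (hq' ▸ hq)
  refine ⟨q', hq'box, hq'sum, ?_, ?_⟩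
  · refine (IsGreatest.csSup_eq ?_).symm
    refine ⟨⟨q', hq'box, hq'sum, rfl⟩, ?_⟩
    rintro r ⟨p, hpbox, hpsum, rfl⟩
    rw [← dotProduct_fin_eq_sum_range, ← dotProduct_fin_eq_sum_range, hq']
    exact hqmax (mem_controlSet_fin_iff.mpr ⟨hpbox, hpsum⟩)
  · obtain ⟨k0, hk0⟩ := card_le_one_iff_subset_singleton.mp
      ((card_map Fin.valEmbedding).trans_le hq1)
    refine ⟨k0, fun k hk hkk0 => ?_⟩
    by_contra hfrac
    have : (⟨k, hk⟩ : Fin n) ∈ fractionalSupport q := by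
      rw [mem_fractionalSupport, ← hq']
      simpa [not_or] using hfrac
    exact hkk0 (mem_singleton.mp (hk0 (mem_map_of_mem Fin.valEmbedding this)))

theorem quasi_bang_bang (n : ℕ) (hn : 1 ≤ n) (v : ℕ → ℝ)
    (Qmin Qmax : ℝ) (h0 : 0 ≤ Qmin) (h1 : Qmin ≤ Qmax) (h2 : Qmax ≤ n)
    (hdiff : ∃ m : ℕ, Qmax - Qmin = m) :
    ∃ q : ℕ → ℝ, (∀ k < n, q k ∈ Set.Icc (0:ℝ) 1) ∧
      (∑ k ∈ Finset.range n, q k) ∈ Set.Icc Qmin Qmax ∧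
      (∑ k ∈ Finset.range n, q k * v k) =
        sSup {r : ℝ | ∃ p : ℕ → ℝ, (∀ k < n, p k ∈ Set.Icc (0:ℝ) 1) ∧
          (∑ k ∈ Finset.range n, p k) ∈ Set.Icc Qmin Qmax ∧
          r = ∑ k ∈ Finset.range n, p k * v k} ∧
      ∃ k0 : ℕ, ∀ k < n, k ≠ k0 → q k ∈ ({0, 1} : Set ℝ) :=
  quasi_bang_bang_general n v Qmin Qmax h0 h1 h2
end
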